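/- Let $\{m_n\}_{n \ge 0}$ be non-decreasing positive integers with $m_0 = d$, and let $W_n \in \mathbb{R}^{m_n \times m_{n-1}}$, $b_n \in \mathbb{R}^{m_n}$. Suppose that for every sequence of diagonal $0$-$1$ matrices $J_n \in \mathcal{D}_{m_n}$, both limits $\lim_{n\to\infty} I_{\infty,m_n} \prod_{i=1}^n J_i W_i$ (in operator norm from $\mathbb{R}^d$ to $\ell^p$) and $\lim_{n\to\infty} I_{\infty,m_n} \sum_{i=1}^n \left(\prod_{k=i+1}^n J_k W_k\right) J_i b_i$ (in $\ell^p$) exist. Then the deep ReLU networks $\mathcal{N}_n(x) = (\bigodot_{i=1}^n \sigma(W_i \cdot + b_i))(x)$, zero-padded into $\ell^p$, converge pointwise for every $x \in [0,1]^d$. -/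

import Mathlib

open scoped ENNReal
open Matrix Filter

noncomputable section


/-- The `m' × m` matrix with the identity on top and zero rows below. -/
def Ipad (m' m : ℕ) : Matrix (Fin m') (Fin m) ℝ :=
  Matrix.of fun i j => if (i : ℕ) = (j : ℕ) then 1 else 0

/-- The diagonal entries of an activation matrix are 0 or 1. -/
def ZeroOne {m : ℕ} (J : Fin m → ℝ) : Prop := ∀ i, J i = 0 ∨ J i = 1

/-- A matrix viewed as a bounded linear operator between `ℓ^p` spaces `ℝ^a → ℝ^b`. -/
def matCLM (p : ℝ≥0∞) [Fact (1 ≤ p)] {a b : ℕ} (A : Matrix (Fin b) (Fin a) ℝ) :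
    PiLp p (fun _ : Fin a => ℝ) →L[ℝ] PiLp p (fun _ : Fin b => ℝ) :=
  LinearMap.toContinuousLinearMap <|
    (WithLp.linearEquiv p ℝ (Fin b → ℝ)).symm.toLinearMap ∘ₗ
      A.mulVecLin ∘ₗ (WithLp.linearEquiv p ℝ (Fin a → ℝ)).toLinearMap

/-- Zero-padding of a finite vector into `ℓ^p`. -/
def padLp (p : ℝ≥0∞) [Fact (1 ≤ p)] {m : ℕ} (x : Fin m → ℝ) : lp (fun _ : ℕ => ℝ) p :=
  ∑ i : Fin m, lp.single p (i : ℕ) (x i)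

/-- Zero-padding as a bounded linear operator `ℝ^m → ℓ^p`. -/
def padCLM (p : ℝ≥0∞) [Fact (1 ≤ p)] (m : ℕ) :
    PiLp p (fun _ : Fin m => ℝ) →L[ℝ] lp (fun _ : ℕ => ℝ) p :=
  LinearMap.toContinuousLinearMap
    { toFun := fun x => padLp p ((WithLp.linearEquiv p ℝ (Fin m → ℝ)) x)
      map_add' := by
        intro x y
        simp only [padLp, WithLp.linearEquiv_apply]
        rw [← Finset.sum_add_distrib]
        refine Finset.sum_congr rfl fun i _ => ?_
        apply lp.ext
        funext j
        by_cases h : j = (i : ℕ)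
        · subst h
          simp [lp.single_apply_self]
        · simp [lp.single_apply_ne p _ _ h]
      map_smul' := by
        intro c x
        simp only [padLp, WithLp.linearEquiv_apply, RingHom.id_apply, Finset.smul_sum]
        refine Finset.sum_congr rfl fun i _ => ?_
        rw [show (WithLp.addEquiv p (Fin m → ℝ)).toFun (c • x) i = c • (WithLp.addEquiv p (Fin m → ℝ)).toFun x i from rfl,
          lp.single_smul] }


/-- Componentwise ReLU. -/
def relu {m : ℕ} (x : Fin m → ℝ) : Fin m → ℝ := fun i => max (x i) 0

/-- The unit cube `[0,1]^d`. -/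
def cube (d : ℕ) : Set (Fin d → ℝ) := {x | ∀ i, x i ∈ Set.Icc (0:ℝ) 1}

variable {m : ℕ → ℕ}

/-- The deep ReLU network `N_n(x) = σ(W_n · + b_n) ∘ ⋯ ∘ σ(W_1 · + b_1) (x)`. -/
def net (W : ∀ n, Matrix (Fin (m (n+1))) (Fin (m n)) ℝ) (b : ∀ n, Fin (m (n+1)) → ℝ)
    (x : Fin (m 0) → ℝ) : ∀ n, Fin (m n) → ℝ
  | 0 => x
  | n+1 => relu (W n *ᵥ net W b x n + b n)

/-- The product `J_n W_n ⋯ J_1 W_1`. -/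
def prodJW (W : ∀ n, Matrix (Fin (m (n+1))) (Fin (m n)) ℝ)
    (J : ∀ n, Fin (m (n+1)) → ℝ) : ∀ n, Matrix (Fin (m n)) (Fin (m 0)) ℝ
  | 0 => 1
  | n+1 => (Matrix.diagonal (J n) * W n) * prodJW W J n

/-- The product `J_{i+t} W_{i+t} ⋯ J_{i+1} W_{i+1}` (product of `t` factors starting at layer `i+1`). -/
def prodJWFrom (W : ∀ n, Matrix (Fin (m (n+1))) (Fin (m n)) ℝ)
    (J : ∀ n, Fin (m (n+1)) → ℝ) (i : ℕ) : ∀ t, Matrix (Fin (m (i+t))) (Fin (m i)) ℝ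
  | 0 => (1 : Matrix (Fin (m i)) (Fin (m i)) ℝ)
  | t+1 => (Matrix.diagonal (J (i+t)) * W (i+t)) * prodJWFrom W J i t

/-- `∑_{i=1}^n (∏_{k=i+1}^n J_k W_k) J_i b_i`, defined by the recursion
`c_0 = 0`, `c_{n+1} = J_{n+1} W_{n+1} c_n + J_{n+1} b_{n+1}`. -/
def biasSum (W : ∀ n, Matrix (Fin (m (n+1))) (Fin (m n)) ℝ)
    (J : ∀ n, Fin (m (n+1)) → ℝ) (b : ∀ n, Fin (m (n+1)) → ℝ) : ∀ n, Fin (m n) → ℝ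
  | 0 => 0
  | n+1 => (Matrix.diagonal (J n) * W n) *ᵥ biasSum W J b n + Matrix.diagonal (J n) *ᵥ b n

/-- Activation domain of a one-layer network. -/
def actDom {a c : ℕ} (J : Fin c → ℝ) (W : Matrix (Fin c) (Fin a) ℝ) (b : Fin c → ℝ) :
    Set (Fin a → ℝ) :=
  {x | ∀ j, (J j = 1 → 0 < (W *ᵥ x + b) j) ∧ (J j ≠ 1 → (W *ᵥ x + b) j ≤ 0)}

/-- Activation domains of a multi-layer network. -/
def actDomMulti (W : ∀ n, Matrix (Fin (m (n+1))) (Fin (m n)) ℝ)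
    (J : ∀ n, Fin (m (n+1)) → ℝ) (b : ∀ n, Fin (m (n+1)) → ℝ) : ℕ → Set (Fin (m 0) → ℝ)
  | 0 => cube (m 0)
  | n+1 => {x ∈ actDomMulti W J b n | net W b x n ∈ actDom (J n) (W n) (b n)}

/-- The Toeplitz matrix of a filter mask `w = (w_0, …, w_s)`. -/
def toep (s mm : ℕ) (w : Fin (s+1) → ℝ) : Matrix (Fin (mm + s)) (Fin mm) ℝ :=
  Matrix.of fun i j =>
    if h : (j : ℕ) ≤ (i : ℕ) ∧ (i : ℕ) - (j : ℕ) ≤ s then w ⟨(i : ℕ) - (j : ℕ), by omega⟩ else 0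

/-- The widths of a CNN: `m_0 = d`, `m_n = m_{n-1} + s_n`. -/
def cnnWidth (d : ℕ) (s : ℕ → ℕ) : ℕ → ℕ
  | 0 => d
  | n+1 => cnnWidth d s n + s n

/-- The CNN: layer `n+1` maps `x ↦ σ(x * w^{(n+1)} + b_{n+1})`. -/
def cnnNet (d : ℕ) (s : ℕ → ℕ) (w : ∀ n, Fin (s n + 1) → ℝ)
    (b : ∀ n, Fin (cnnWidth d s (n+1)) → ℝ) (x : Fin d → ℝ) :
    ∀ n, Fin (cnnWidth d s n) → ℝ
  | 0 => x
  | n+1 => relu (fun i => (toep (s n) (cnnWidth d s n) (w n) *ᵥ cnnNet d s w b x n) i + b n i)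

/-
At a fixed input `x`, each ReLU layer acts as the linear map `diag(J_n)` where `J_n` records which
neurons of layer `n` are active at `x`. Hence `N_n(x) = (∏ J_i W_i) x + ∑ (∏ J_k W_k) J_i b_i`
for this one activation sequence, and both terms converge by hypothesis.
-/

lemma padCLM_apply_toLp (p : ℝ≥0∞) [Fact (1 ≤ p)] {k : ℕ} (u : Fin k → ℝ) :
    padCLM p k (WithLp.toLp p u) = padLp p u :=
  rfl

lemma padLp_add (p : ℝ≥0∞) [Fact (1 ≤ p)] {k : ℕ} (u v : Fin k → ℝ) :
    padLp p (u + v) = padLp p u + padLp p v := by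
  rw [← padCLM_apply_toLp, WithLp.toLp_add, map_add, padCLM_apply_toLp, padCLM_apply_toLp]

lemma padCLM_comp_matCLM_apply_toLp (p : ℝ≥0∞) [Fact (1 ≤ p)] {a k : ℕ}
    (A : Matrix (Fin k) (Fin a) ℝ) (x : Fin a → ℝ) :
    (padCLM p k).comp (matCLM p A) (WithLp.toLp p x) = padLp p (A *ᵥ x) :=
  rfl

def positivePart {k : ℕ} (y : Fin k → ℝ) : Fin k → ℝ := fun j => if 0 < y j then 1 else 0

lemma zeroOne_positivePart {k : ℕ} (y : Fin k → ℝ) : ZeroOne (positivePart y) := by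
  intro j
  unfold positivePart
  split_ifs <;> simp

lemma relu_eq_diagonal_positivePart_mulVec {k : ℕ} (y : Fin k → ℝ) :
    relu y = diagonal (positivePart y) *ᵥ y := by
  funext j
  rw [mulVec_diagonal, relu, positivePart]
  split_ifs with hy
  · rw [one_mul, max_eq_left hy.le]
  · rw [zero_mul, max_eq_right (not_lt.mp hy)]

def activationPattern (W : ∀ n, Matrix (Fin (m (n+1))) (Fin (m n)) ℝ)
    (b : ∀ n, Fin (m (n+1)) → ℝ) (x : Fin (m 0) → ℝ) (n : ℕ) : Fin (m (n+1)) → ℝ :=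
  positivePart (W n *ᵥ net W b x n + b n)

lemma net_eq_prodJW_mulVec_add_biasSum (W : ∀ n, Matrix (Fin (m (n+1))) (Fin (m n)) ℝ)
    (b : ∀ n, Fin (m (n+1)) → ℝ) (x : Fin (m 0) → ℝ) (n : ℕ) :
    net W b x n = prodJW W (activationPattern W b x) n *ᵥ x
      + biasSum W (activationPattern W b x) b n := by
  induction n with
  | zero => simp [net, prodJW, biasSum]
  | succ n ih =>
    rw [net, relu_eq_diagonal_positivePart_mulVec]
    change diagonal (activationPattern W b x n) *ᵥ _ = _
    rw [ih, prodJW, biasSum]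
    simp only [mulVec_add, mulVec_mulVec, Matrix.mul_assoc, add_assoc]

theorem stmt19_general (p : ℝ≥0∞) [Fact (1 ≤ p)] (m : ℕ → ℕ)
    (W : ∀ n, Matrix (Fin (m (n+1))) (Fin (m n)) ℝ)
    (b : ∀ n, Fin (m (n+1)) → ℝ)
    (h : ∀ J : ∀ n, Fin (m (n+1)) → ℝ, (∀ n, ZeroOne (J n)) →
      (∃ L : PiLp p (fun _ : Fin (m 0) => ℝ) →L[ℝ] lp (fun _ : ℕ => ℝ) p,
        Tendsto (fun n => (padCLM p (m n)).comp (matCLM p (prodJW W J n)))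
          atTop (nhds L)) ∧
      (∃ c : lp (fun _ : ℕ => ℝ) p,
        Tendsto (fun n => padLp p (biasSum W J b n)) atTop (nhds c))) :
    ∀ x ∈ cube (m 0), ∃ L : lp (fun _ : ℕ => ℝ) p,
      Tendsto (fun n => padLp p (net W b x n)) atTop (nhds L) := by
  intro x _
  set J := activationPattern W b x
  obtain ⟨⟨L, hL⟩, ⟨c, hc⟩⟩ := h J fun n => zeroOne_positivePart _
  have hlinear : Tendsto (fun n => padLp p (prodJW W J n *ᵥ x)) atTop
      (nhds (L (WithLp.toLp p x))) := by
    simpa only [Function.comp_def, ContinuousLinearMap.apply_apply,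
      padCLM_comp_matCLM_apply_toLp] using
      ((ContinuousLinearMap.apply ℝ _ (WithLp.toLp p x)).continuous.tendsto L).comp hL
  refine ⟨L (WithLp.toLp p x) + c, ?_⟩
  simpa only [net_eq_prodJW_mulVec_add_biasSum, padLp_add] using hlinear.add hc

theorem stmt19 (p : ℝ≥0∞) [Fact (1 ≤ p)] (m : ℕ → ℕ) (hpos : ∀ n, 0 < m n)
    (hmono : ∀ n, m n ≤ m (n+1))
    (W : ∀ n, Matrix (Fin (m (n+1))) (Fin (m n)) ℝ)
    (b : ∀ n, Fin (m (n+1)) → ℝ)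
    (h : ∀ J : ∀ n, Fin (m (n+1)) → ℝ, (∀ n, ZeroOne (J n)) →
      (∃ L : PiLp p (fun _ : Fin (m 0) => ℝ) →L[ℝ] lp (fun _ : ℕ => ℝ) p,
        Tendsto (fun n => (padCLM p (m n)).comp (matCLM p (prodJW W J n)))
          atTop (nhds L)) ∧
      (∃ c : lp (fun _ : ℕ => ℝ) p,
        Tendsto (fun n => padLp p (biasSum W J b n)) atTop (nhds c))) :
    ∀ x ∈ cube (m 0), ∃ L : lp (fun _ : ℕ => ℝ) p,
      Tendsto (fun n => padLp p (net W b x n)) atTop (nhds L) :=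
  stmt19_general p m W b h

end
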